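/- Let A ∈ ℝ^{m×n} be nonzero, x⋆ with Ax⋆ = b, and S ∈ ℝ^{d×m} satisfying (1-ε)‖Ax‖₂² ≤ ‖SAx‖₂² ≤ (1+ε)‖Ax‖₂² for all x ∈ ℝ^n, with 0 < ε < 1, and such that all rows of SA are nonzero. Starting from x₀ in the row space of A, the CSK iterates x_{k+1} = x_k + (((Sb)_{i_k} - (SA)^{(i_k)} x_k)/‖(SA)^{(i_k)}‖₂²)·((SA)^{(i_k)})ᵀ with i_k maximizing |(Sb)_i - (SA x_k)_i|/‖(SA)^{(i)}‖₂ satisfy ‖x_{k+1} - x⋆‖₂² ≤ (1 - (1-ε)³ σ_r(A)²/(n ‖A‖₂²)) ‖x_k - x⋆‖₂². -/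

import Mathlib

open scoped BigOperators

/-- Squared Euclidean norm of a vector in `ℝ^n`. -/
noncomputable def sqNorm {n : ℕ} (x : Fin n → ℝ) : ℝ := ∑ i, x i ^ 2

/-- Squared Frobenius norm of a matrix. -/
noncomputable def frobSq {d n : ℕ} (M : Matrix (Fin d) (Fin n) ℝ) : ℝ :=
  ∑ i, ∑ j, (M i j) ^ 2

/-- The `k`-th largest singular value of a real matrix, via the Courant–Fischer
max-min characterization: the supremum of nonnegative `c` such that some
`k`-dimensional subspace `V` satisfies `‖Ay‖ ≥ c‖y‖` for all `y ∈ V`. -/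
noncomputable def sv {m n : ℕ} (A : Matrix (Fin m) (Fin n) ℝ) (k : ℕ) : ℝ :=
  sSup {c : ℝ | 0 ≤ c ∧ ∃ V : Submodule ℝ (Fin n → ℝ), Module.finrank ℝ V = k ∧
    ∀ y ∈ V, c ^ 2 * sqNorm y ≤ sqNorm (A.mulVec y)}

/-!
The error `e = x_k - x⋆` lies in the row space of `A`. A Kaczmarz step is the orthogonal
projection onto the hyperplane of row `i`, so it lowers `‖e‖²` by `rᵢ²/‖(SA)ᵢ‖²`, and the greedy
choice of `i` makes this at least `‖SAe‖²/‖SA‖_F²`. On the row space `‖Ae‖ ≥ σ_r ‖e‖`, and the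
embedding gives `‖SAe‖² ≥ (1-ε)‖Ae‖²` together with
`‖SA‖_F² ≤ (1+ε)‖A‖_F² ≤ (1+ε) n σ₁² ≤ n σ₁² / (1-ε)²`.
-/

open Matrix

section SqNorm

variable {n : ℕ}

lemma sqNorm_eq_dotProduct (x : Fin n → ℝ) : sqNorm x = x ⬝ᵥ x := by
  simp only [sqNorm, dotProduct, sq]

lemma sqNorm_nonneg (x : Fin n → ℝ) : 0 ≤ sqNorm x :=
  Finset.sum_nonneg fun _ _ => sq_nonneg _

lemma sqNorm_pos {x : Fin n → ℝ} (hx : x ≠ 0) : 0 < sqNorm x :=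
  (sqNorm_nonneg x).lt_of_ne fun h =>
    hx (dotProduct_self_eq_zero.1 (sqNorm_eq_dotProduct x ▸ h.symm))

lemma sqNorm_zero : sqNorm (0 : Fin n → ℝ) = 0 := by
  simp [sqNorm]

lemma sqNorm_neg (x : Fin n → ℝ) : sqNorm (-x) = sqNorm x := by
  simp [sqNorm_eq_dotProduct]

lemma sqNorm_add (u v : Fin n → ℝ) : sqNorm (u + v) = sqNorm u + 2 * (u ⬝ᵥ v) + sqNorm v := by
  simp only [sqNorm_eq_dotProduct, add_dotProduct, dotProduct_add, dotProduct_comm v u]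
  ring

lemma sqNorm_smul (t : ℝ) (v : Fin n → ℝ) : sqNorm (t • v) = t ^ 2 * sqNorm v := by
  simp only [sqNorm_eq_dotProduct, smul_dotProduct, dotProduct_smul, smul_eq_mul]
  ring

lemma sqNorm_single (j : Fin n) : sqNorm (Pi.single j (1 : ℝ)) = 1 := by
  simp [sqNorm_eq_dotProduct]

end SqNorm

section FrobSq

variable {m n d : ℕ}

lemma frobSq_nonneg (M : Matrix (Fin m) (Fin n) ℝ) : 0 ≤ frobSq M :=
  Finset.sum_nonneg fun i _ => sqNorm_nonneg (M i)

lemma sqNorm_mulVec_le_frobSq_mul (M : Matrix (Fin m) (Fin n) ℝ) (y : Fin n → ℝ) :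
    sqNorm (M *ᵥ y) ≤ frobSq M * sqNorm y :=
  calc sqNorm (M *ᵥ y) = ∑ i, (∑ j, M i j * y j) ^ 2 := rfl
    _ ≤ ∑ i, (∑ j, M i j ^ 2) * sqNorm y :=
        Finset.sum_le_sum fun _ _ => Finset.sum_mul_sq_le_sq_mul_sq _ _ _
    _ = frobSq M * sqNorm y := (Finset.sum_mul _ _ _).symm

lemma sqNorm_row_le_frobSq (M : Matrix (Fin m) (Fin n) ℝ) (i : Fin m) : sqNorm (M i) ≤ frobSq M :=
  Finset.single_le_sum (f := fun j => sqNorm (M j)) (fun _ _ => sqNorm_nonneg _)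
    (Finset.mem_univ i)

lemma frobSq_eq_sum_sqNorm_mulVec_single (M : Matrix (Fin m) (Fin n) ℝ) :
    frobSq M = ∑ j, sqNorm (M *ᵥ Pi.single j 1) := by
  rw [frobSq, Finset.sum_comm]
  simp [sqNorm, mulVec_single]

lemma frobSq_le_of_sqNorm_mulVec_le {M : Matrix (Fin d) (Fin n) ℝ} {N : Matrix (Fin m) (Fin n) ℝ}
    {C : ℝ} (h : ∀ v, sqNorm (M *ᵥ v) ≤ C * sqNorm (N *ᵥ v)) : frobSq M ≤ C * frobSq N := by
  simp only [frobSq_eq_sum_sqNorm_mulVec_single, Finset.mul_sum]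
  exact Finset.sum_le_sum fun j _ => h _

end FrobSq

section RowSpace

variable {m n d : ℕ} (A : Matrix (Fin m) (Fin n) ℝ)

lemma dotProduct_eq_zero_of_mem_range_transpose {u w : Fin n → ℝ}
    (hu : u ∈ LinearMap.range Aᵀ.mulVecLin) (hw : A *ᵥ w = 0) : u ⬝ᵥ w = 0 := by
  obtain ⟨z, rfl⟩ := hu
  rw [mulVecLin_apply, mulVec_transpose, ← dotProduct_mulVec, hw, dotProduct_zero]

lemma mul_row_mem_range_transpose (S : Matrix (Fin d) (Fin m) ℝ) (i : Fin d) :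
    (S * A) i ∈ LinearMap.range Aᵀ.mulVecLin :=
  ⟨S i, by ext j; simp [vecMul, dotProduct, mul_apply]⟩

lemma finrank_ker_mulVecLin_add_rank :
    Module.finrank ℝ (LinearMap.ker A.mulVecLin) + A.rank = n := by
  have h := LinearMap.finrank_range_add_finrank_ker A.mulVecLin
  rw [Module.finrank_fin_fun] at h
  rw [Matrix.rank]
  omega

end RowSpace

section SingularValues

variable {m n : ℕ} (A : Matrix (Fin m) (Fin n) ℝ)

def svCandidates (k : ℕ) : Set ℝ :=
  {c : ℝ | 0 ≤ c ∧ ∃ V : Submodule ℝ (Fin n → ℝ), Module.finrank ℝ V = k ∧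
    ∀ y ∈ V, c ^ 2 * sqNorm y ≤ sqNorm (A.mulVec y)}

lemma sv_nonneg (k : ℕ) : 0 ≤ sv A k :=
  Real.sSup_nonneg fun _ hc => hc.1

lemma bddAbove_svCandidates {k : ℕ} (hk : 0 < k) : BddAbove (svCandidates A k) := by
  refine ⟨√(frobSq A), fun c ⟨_, V, hVdim, hV⟩ => ?_⟩
  obtain ⟨y, hyV, hy0⟩ := (Submodule.ne_bot_iff V).1 fun h => by
    rw [h, finrank_bot] at hVdim
    omega
  have hc : c ^ 2 * sqNorm y ≤ frobSq A * sqNorm y :=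
    (hV y hyV).trans (sqNorm_mulVec_le_frobSq_mul A y)
  exact Real.le_sqrt_of_sq_le (le_of_mul_le_mul_right hc (sqNorm_pos hy0))

lemma sqNorm_mulVec_le_sv_one_sq_mul (y : Fin n → ℝ) :
    sqNorm (A *ᵥ y) ≤ sv A 1 ^ 2 * sqNorm y := by
  rcases eq_or_ne y 0 with rfl | hy
  · simp [sqNorm_zero]
  have hypos := sqNorm_pos hy
  set c := √(sqNorm (A *ᵥ y) / sqNorm y)
  have hc2 : c ^ 2 * sqNorm y = sqNorm (A *ᵥ y) := by
    rw [Real.sq_sqrt (div_nonneg (sqNorm_nonneg _) hypos.le), div_mul_cancel₀ _ hypos.ne']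
  have hc : c ∈ svCandidates A 1 := by
    refine ⟨Real.sqrt_nonneg _, Submodule.span ℝ {y}, finrank_span_singleton hy, ?_⟩
    intro z hz
    obtain ⟨t, rfl⟩ := Submodule.mem_span_singleton.1 hz
    rw [mulVec_smul, sqNorm_smul, sqNorm_smul, ← hc2]
    exact le_of_eq (by ring)
  have hcle : c ≤ sv A 1 := le_csSup (bddAbove_svCandidates A one_pos) hc
  rw [← hc2]
  gcongr

lemma frobSq_le_card_mul_sv_one_sq : frobSq A ≤ n * sv A 1 ^ 2 :=
  calc frobSq A = ∑ j, sqNorm (A *ᵥ Pi.single j 1) := frobSq_eq_sum_sqNorm_mulVec_single A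
    _ ≤ ∑ _j : Fin n, sv A 1 ^ 2 := Finset.sum_le_sum fun j _ => by
        simpa [sqNorm_single] using sqNorm_mulVec_le_sv_one_sq_mul A (Pi.single j 1)
    _ = n * sv A 1 ^ 2 := by simp

lemma sq_sv_mul_sqNorm_le {k : ℕ} {e : Fin n → ℝ}
    (h : ∀ c ∈ svCandidates A k, c ^ 2 * sqNorm e ≤ sqNorm (A *ᵥ e)) :
    sv A k ^ 2 * sqNorm e ≤ sqNorm (A *ᵥ e) := by
  rcases (sqNorm_nonneg e).eq_or_lt with he | he
  · rw [← he, mul_zero]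
    exact sqNorm_nonneg _
  have hsv : sv A k ≤ √(sqNorm (A *ᵥ e) / sqNorm e) :=
    Real.sSup_le (fun c hc => Real.le_sqrt_of_sq_le ((le_div_iff₀ he).2 (h c hc)))
      (Real.sqrt_nonneg _)
  have hsv2 := pow_le_pow_left₀ (sv_nonneg A k) hsv 2
  rwa [Real.sq_sqrt (div_nonneg (sqNorm_nonneg _) he.le), le_div_iff₀ he] at hsv2

/- `V` meets `ker A` trivially and has complementary dimension, so `e = y + w` with `y ∈ V` and
`A w = 0`; then `A y = A e`, and `‖y‖ ≥ ‖e‖` because `e` is orthogonal to `ker A`. -/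
lemma sq_mul_sqNorm_le_of_mem_svCandidates_rank {c : ℝ} {e : Fin n → ℝ}
    (hc : c ∈ svCandidates A A.rank) (he : e ∈ LinearMap.range Aᵀ.mulVecLin) :
    c ^ 2 * sqNorm e ≤ sqNorm (A *ᵥ e) := by
  obtain ⟨hc0, V, hVdim, hV⟩ := hc
  rcases hc0.eq_or_lt with rfl | hcpos
  · simpa using sqNorm_nonneg _
  set K := LinearMap.ker A.mulVecLin
  have hdisj : Disjoint V K := by
    refine Submodule.disjoint_def.2 fun y hyV (hyK : A *ᵥ y = 0) => ?_
    have hy := hV y hyV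
    rw [hyK, sqNorm_zero] at hy
    by_contra hy0
    exact (mul_pos (pow_pos hcpos 2) (sqNorm_pos hy0)).not_ge hy
  have hsup : V ⊔ K = ⊤ := Submodule.eq_top_of_disjoint V K
    (by rw [Module.finrank_fin_fun, hVdim, add_comm, finrank_ker_mulVecLin_add_rank]) hdisj
  obtain ⟨y, hyV, w, (hAw : A *ᵥ w = 0), hyw⟩ :=
    Submodule.mem_sup.1 (hsup ▸ Submodule.mem_top : e ∈ V ⊔ K)
  have hAy : A *ᵥ y = A *ᵥ e := by rw [← hyw, mulVec_add, hAw, add_zero]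
  have hy : sqNorm y = sqNorm e + sqNorm w := by
    rw [show y = e + -w by rw [← hyw]; abel, sqNorm_add, sqNorm_neg, dotProduct_neg,
      dotProduct_eq_zero_of_mem_range_transpose A he hAw]
    ring
  calc c ^ 2 * sqNorm e ≤ c ^ 2 * sqNorm y := by
        gcongr
        linarith [sqNorm_nonneg w]
    _ ≤ sqNorm (A *ᵥ y) := hV y hyV
    _ = sqNorm (A *ᵥ e) := by rw [hAy]

lemma sq_sv_rank_mul_sqNorm_le {e : Fin n → ℝ} (he : e ∈ LinearMap.range Aᵀ.mulVecLin) :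
    sv A A.rank ^ 2 * sqNorm e ≤ sqNorm (A *ᵥ e) :=
  sq_sv_mul_sqNorm_le A fun _ hc => sq_mul_sqNorm_le_of_mem_svCandidates_rank A hc he

end SingularValues

lemma sum_sq_le_of_forall_abs_div_sqrt_le {ι : Type*} [Fintype ι] {u w : ι → ℝ}
    (hw : ∀ j, 0 < w j) {i : ι} (hi : ∀ j, |u j| / √(w j) ≤ |u i| / √(w i)) :
    ∑ j, u j ^ 2 ≤ u i ^ 2 / w i * ∑ j, w j := by
  rw [Finset.mul_sum]
  refine Finset.sum_le_sum fun j _ => ?_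
  have h := pow_le_pow_left₀ (by positivity) (hi j) 2
  rw [div_pow, div_pow, sq_abs, sq_abs, Real.sq_sqrt (hw j).le, Real.sq_sqrt (hw i).le] at h
  calc u j ^ 2 = u j ^ 2 / w j * w j := (div_mul_cancel₀ _ (hw j).ne').symm
    _ ≤ u i ^ 2 / w i * w j := mul_le_mul_of_nonneg_right h (hw j).le

section Kaczmarz

variable {d n : ℕ}

noncomputable def kaczmarzStep (M : Matrix (Fin d) (Fin n) ℝ) (c : Fin d → ℝ) (i : Fin d)
    (x : Fin n → ℝ) : Fin n → ℝ :=
  x + ((c i - (M *ᵥ x) i) / sqNorm (M i)) • M i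

variable {M : Matrix (Fin d) (Fin n) ℝ} {c : Fin d → ℝ} {xs : Fin n → ℝ}

lemma sqNorm_kaczmarzStep_sub (hc : M *ᵥ xs = c) {i : Fin d} (hi : M i ≠ 0) (x : Fin n → ℝ) :
    sqNorm (kaczmarzStep M c i x - xs) =
      sqNorm (x - xs) - (c i - (M *ᵥ x) i) ^ 2 / sqNorm (M i) := by
  have hN := (sqNorm_pos hi).ne'
  set r := c i - (M *ᵥ x) i
  have hdot : (x - xs) ⬝ᵥ M i = -r := by
    rw [dotProduct_comm]
    change (M *ᵥ (x - xs)) i = -r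
    rw [mulVec_sub, hc]
    simp only [r, Pi.sub_apply, neg_sub]
  rw [kaczmarzStep, show x + (r / sqNorm (M i)) • M i - xs = (x - xs) + (r / sqNorm (M i)) • M i
    by abel, sqNorm_add, sqNorm_smul, dotProduct_smul, hdot, smul_eq_mul]
  field_simp
  ring

lemma sqNorm_mulVec_sub_le_of_greedy (hc : M *ᵥ xs = c) (hrows : ∀ j, M j ≠ 0) {i : Fin d}
    {x : Fin n → ℝ}
    (hi : ∀ j, |c j - (M *ᵥ x) j| / √(sqNorm (M j)) ≤ |c i - (M *ᵥ x) i| / √(sqNorm (M i))) :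
    sqNorm (M *ᵥ (x - xs)) ≤ (c i - (M *ᵥ x) i) ^ 2 / sqNorm (M i) * frobSq M := by
  rw [mulVec_sub, hc, ← neg_sub, sqNorm_neg]
  exact sum_sq_le_of_forall_abs_div_sqrt_le (fun j => sqNorm_pos (hrows j)) hi

theorem sqNorm_kaczmarzStep_sub_le_of_greedy (hc : M *ᵥ xs = c) (hrows : ∀ j, M j ≠ 0)
    {i : Fin d} {x : Fin n → ℝ}
    (hi : ∀ j, |c j - (M *ᵥ x) j| / √(sqNorm (M j)) ≤ |c i - (M *ᵥ x) i| / √(sqNorm (M i))) :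
    sqNorm (kaczmarzStep M c i x - xs) ≤
      sqNorm (x - xs) - sqNorm (M *ᵥ (x - xs)) / frobSq M := by
  rw [sqNorm_kaczmarzStep_sub hc (hrows i)]
  refine sub_le_sub_left (div_le_of_le_mul₀ (frobSq_nonneg M)
    (div_nonneg (sq_nonneg _) (sqNorm_nonneg _))
    (sqNorm_mulVec_sub_le_of_greedy hc hrows hi)) _

theorem sqNorm_kaczmarzStep_sub_le_one_sub_mul (hc : M *ᵥ xs = c) (hrows : ∀ j, M j ≠ 0)
    {i : Fin d} {x : Fin n → ℝ}
    (hi : ∀ j, |c j - (M *ᵥ x) j| / √(sqNorm (M j)) ≤ |c i - (M *ᵥ x) i| / √(sqNorm (M i)))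
    {μ L : ℝ} (hlow : μ * sqNorm (x - xs) ≤ sqNorm (M *ᵥ (x - xs)))
    (hL : frobSq M ≤ L) :
    sqNorm (kaczmarzStep M c i x - xs) ≤ (1 - μ / L) * sqNorm (x - xs) := by
  have hF : 0 < frobSq M := (sqNorm_pos (hrows i)).trans_le (sqNorm_row_le_frobSq M i)
  calc sqNorm (kaczmarzStep M c i x - xs)
      ≤ sqNorm (x - xs) - sqNorm (M *ᵥ (x - xs)) / frobSq M :=
        sqNorm_kaczmarzStep_sub_le_of_greedy hc hrows hi
    _ ≤ sqNorm (x - xs) - μ * sqNorm (x - xs) / L :=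
        sub_le_sub_left (div_le_div₀ (sqNorm_nonneg _) hlow hF hL) _
    _ = (1 - μ / L) * sqNorm (x - xs) := by ring

lemma kaczmarzStep_mul_mem_range_transpose {m : ℕ} {A : Matrix (Fin m) (Fin n) ℝ}
    {S : Matrix (Fin d) (Fin m) ℝ} {x : Fin n → ℝ} (hx : x ∈ LinearMap.range Aᵀ.mulVecLin)
    (c : Fin d → ℝ) (i : Fin d) : kaczmarzStep (S * A) c i x ∈ LinearMap.range Aᵀ.mulVecLin :=
  add_mem hx (Submodule.smul_mem _ _ (mul_row_mem_range_transpose A S i))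

end Kaczmarz

lemma one_sub_sq_mul_one_add_le_one {ε : ℝ} (h0 : 0 ≤ ε) (h1 : ε ≤ 1) :
    (1 - ε) ^ 2 * (1 + ε) ≤ 1 := by
  nlinarith [mul_nonneg (mul_nonneg h0 h0) (sub_nonneg.2 h1)]

lemma frobSq_le_card_mul_sv_one_sq_div_of_embedding {m n d : ℕ} {A : Matrix (Fin m) (Fin n) ℝ}
    {M : Matrix (Fin d) (Fin n) ℝ} {ε : ℝ} (hε0 : 0 ≤ ε) (hε1 : ε < 1)
    (hemb : ∀ v, sqNorm (M *ᵥ v) ≤ (1 + ε) * sqNorm (A *ᵥ v)) :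
    frobSq M ≤ n * sv A 1 ^ 2 / (1 - ε) ^ 2 := by
  rw [le_div_iff₀ (pow_pos (sub_pos.2 hε1) 2)]
  calc frobSq M * (1 - ε) ^ 2 ≤ (1 + ε) * frobSq A * (1 - ε) ^ 2 := by
        gcongr
        exact frobSq_le_of_sqNorm_mulVec_le hemb
    _ = (1 - ε) ^ 2 * (1 + ε) * frobSq A := by ring
    _ ≤ 1 * frobSq A := mul_le_mul_of_nonneg_right
        (one_sub_sq_mul_one_add_le_one hε0 hε1.le) (frobSq_nonneg A)
    _ ≤ n * sv A 1 ^ 2 := (one_mul _).trans_le (frobSq_le_card_mul_sv_one_sq A)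

theorem csk_convergence_step_general {m n d : ℕ}
    (A : Matrix (Fin m) (Fin n) ℝ) (b : Fin m → ℝ) (xs : Fin n → ℝ)
    (hxs : A.mulVec xs = b) (hxs_row : ∃ z : Fin m → ℝ, A.transpose.mulVec z = xs)
    (ε : ℝ) (hε0 : 0 < ε) (hε1 : ε < 1)
    (S : Matrix (Fin d) (Fin m) ℝ)
    (hemb : ∀ v : Fin n → ℝ,
      (1 - ε) * sqNorm (A.mulVec v) ≤ sqNorm ((S * A).mulVec v) ∧
      sqNorm ((S * A).mulVec v) ≤ (1 + ε) * sqNorm (A.mulVec v))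
    (hrows : ∀ i : Fin d, (S * A) i ≠ 0)
    (x : ℕ → Fin n → ℝ) (hx0 : ∃ z : Fin m → ℝ, A.transpose.mulVec z = x 0)
    (ik : ℕ → Fin d)
    (hik : ∀ (k : ℕ) (i : Fin d),
      |S.mulVec b i - (S * A).mulVec (x k) i| / Real.sqrt (sqNorm ((S * A) i)) ≤
      |S.mulVec b (ik k) - (S * A).mulVec (x k) (ik k)|
        / Real.sqrt (sqNorm ((S * A) (ik k))))
    (hupd : ∀ k : ℕ, x (k + 1) = x k +
      ((S.mulVec b (ik k) - ∑ j, (S * A) (ik k) j * x k j) / sqNorm ((S * A) (ik k)))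
        • (S * A) (ik k)) :
    ∀ k : ℕ, sqNorm (x (k + 1) - xs) ≤
      (1 - (1 - ε) ^ 3 * (sv A A.rank) ^ 2 / (n * (sv A 1) ^ 2))
        * sqNorm (x k - xs) := by
  have hiter : ∀ k, x k ∈ LinearMap.range Aᵀ.mulVecLin := by
    intro k
    induction k with
    | zero => exact hx0
    | succ k ih => exact hupd k ▸ kaczmarzStep_mul_mem_range_transpose ih _ _
  have hc : (S * A) *ᵥ xs = S *ᵥ b := by rw [← mulVec_mulVec, hxs]
  intro k
  have hlow : (1 - ε) * sv A A.rank ^ 2 * sqNorm (x k - xs) ≤ sqNorm ((S * A) *ᵥ (x k - xs)) :=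
    calc (1 - ε) * sv A A.rank ^ 2 * sqNorm (x k - xs)
        ≤ (1 - ε) * sqNorm (A *ᵥ (x k - xs)) := by
          rw [mul_assoc]
          exact mul_le_mul_of_nonneg_left
            (sq_sv_rank_mul_sqNorm_le A (sub_mem (hiter k) hxs_row)) (sub_pos.2 hε1).le
      _ ≤ sqNorm ((S * A) *ᵥ (x k - xs)) := (hemb _).1
  have hstep := sqNorm_kaczmarzStep_sub_le_one_sub_mul hc hrows (hik k) hlow
    (frobSq_le_card_mul_sv_one_sq_div_of_embedding hε0.le hε1 fun v => (hemb v).2)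
  rw [hupd k]
  refine hstep.trans_eq ?_
  rw [div_div_eq_mul_div]
  ring

/-- per-step convergence bound of the count-sketch Kaczmarz method:
`‖x_{k+1} - x⋆‖² ≤ (1 - (1-ε)³ σ_r(A)²/(n ‖A‖₂²)) ‖x_k - x⋆‖²`. -/
theorem csk_convergence_step {m n d : ℕ}
    (A : Matrix (Fin m) (Fin n) ℝ) (hA : A ≠ 0) (b : Fin m → ℝ) (xs : Fin n → ℝ)
    (hxs : A.mulVec xs = b) (hxs_row : ∃ z : Fin m → ℝ, A.transpose.mulVec z = xs)
    (ε : ℝ) (hε0 : 0 < ε) (hε1 : ε < 1)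
    (S : Matrix (Fin d) (Fin m) ℝ)
    (hemb : ∀ v : Fin n → ℝ,
      (1 - ε) * sqNorm (A.mulVec v) ≤ sqNorm ((S * A).mulVec v) ∧
      sqNorm ((S * A).mulVec v) ≤ (1 + ε) * sqNorm (A.mulVec v))
    (hrows : ∀ i : Fin d, (S * A) i ≠ 0)
    (x : ℕ → Fin n → ℝ) (hx0 : ∃ z : Fin m → ℝ, A.transpose.mulVec z = x 0)
    (ik : ℕ → Fin d)
    (hik : ∀ (k : ℕ) (i : Fin d),
      |S.mulVec b i - (S * A).mulVec (x k) i| / Real.sqrt (sqNorm ((S * A) i)) ≤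
      |S.mulVec b (ik k) - (S * A).mulVec (x k) (ik k)|
        / Real.sqrt (sqNorm ((S * A) (ik k))))
    (hupd : ∀ k : ℕ, x (k + 1) = x k +
      ((S.mulVec b (ik k) - ∑ j, (S * A) (ik k) j * x k j) / sqNorm ((S * A) (ik k)))
        • (S * A) (ik k)) :
    ∀ k : ℕ, sqNorm (x (k + 1) - xs) ≤
      (1 - (1 - ε) ^ 3 * (sv A A.rank) ^ 2 / (n * (sv A 1) ^ 2))
        * sqNorm (x k - xs) :=
  csk_convergence_step_general A b xs hxs hxs_row ε hε0 hε1 S hemb hrows x hx0 ik hik hupd
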